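/- arXiv:1503.02685 — 3 statements merged into one kernel-verified Lean document; each statement's English description precedes it below -/
import Mathlib

section
/- Von Neumann stability of the direct scheme for constant mass: if r_x² + r_y² ≤ 1/4 then for all real wavevectors (k_x, k_y, k_x', k_y') and all β ≥ 0, both roots s± = [(p + p' + β²/2) ± √((p + p' + β²/2)² − (1+β²)(p−p')²)] / (1+β²), where p = r_y² sin²(k_y Δ_y/2) + r_x² sin²(k_x Δ_x/2) and p' is defined analogously with primed wavevectors, satisfy 0 ≤ s± ≤ 1, and the radicand (p + p' + β²/2)² − (1+β²)(p−p')² is nonnegative. -/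
private lemma vn_aux (p p' β : ℝ) (hβ : 0 ≤ β)
    (hp0 : 0 ≤ p) (hp : p ≤ 1 / 4) (hp'0 : 0 ≤ p') (hp' : p' ≤ 1 / 4) :
    0 ≤ (p + p' + β ^ 2 / 2) ^ 2 - (1 + β ^ 2) * (p - p') ^ 2 ∧
      0 ≤ ((p + p' + β ^ 2 / 2) +
          Real.sqrt ((p + p' + β ^ 2 / 2) ^ 2 - (1 + β ^ 2) * (p - p') ^ 2)) / (1 + β ^ 2) ∧
      ((p + p' + β ^ 2 / 2) +
          Real.sqrt ((p + p' + β ^ 2 / 2) ^ 2 - (1 + β ^ 2) * (p - p') ^ 2)) / (1 + β ^ 2) ≤ 1 ∧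
      0 ≤ ((p + p' + β ^ 2 / 2) -
          Real.sqrt ((p + p' + β ^ 2 / 2) ^ 2 - (1 + β ^ 2) * (p - p') ^ 2)) / (1 + β ^ 2) ∧
      ((p + p' + β ^ 2 / 2) -
          Real.sqrt ((p + p' + β ^ 2 / 2) ^ 2 - (1 + β ^ 2) * (p - p') ^ 2)) / (1 + β ^ 2) ≤ 1 := by
  have hden : (0:ℝ) < 1 + β ^ 2 := by positivity
  have ha0 : 0 ≤ p + p' + β ^ 2 / 2 := by positivity
  have h5 : (p - p') ^ 2 ≤ p + p' := by
    nlinarith [mul_nonneg hp0 hp'0, mul_nonneg hp0 (by linarith : (0:ℝ) ≤ 1/4 - p),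
      mul_nonneg hp'0 (by linarith : (0:ℝ) ≤ 1/4 - p')]
  have hrad0 : 0 ≤ (p + p' + β ^ 2 / 2) ^ 2 - (1 + β ^ 2) * (p - p') ^ 2 := by
    nlinarith [mul_nonneg hp0 hp'0, sq_nonneg (β ^ 2),
      mul_nonneg (sq_nonneg β) (by linarith : (0:ℝ) ≤ p + p' - (p - p') ^ 2)]
  have hs1 : Real.sqrt ((p + p' + β ^ 2 / 2) ^ 2 - (1 + β ^ 2) * (p - p') ^ 2)
      ≤ p + p' + β ^ 2 / 2 := by
    have h : (p + p' + β ^ 2 / 2) ^ 2 - (1 + β ^ 2) * (p - p') ^ 2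
        ≤ (p + p' + β ^ 2 / 2) ^ 2 := by nlinarith [sq_nonneg (p - p')]
    calc _ ≤ Real.sqrt ((p + p' + β ^ 2 / 2) ^ 2) := Real.sqrt_le_sqrt h
      _ = p + p' + β ^ 2 / 2 := Real.sqrt_sq ha0
  have hb0 : 0 ≤ 1 + β ^ 2 - (p + p' + β ^ 2 / 2) := by nlinarith
  have hs2 : Real.sqrt ((p + p' + β ^ 2 / 2) ^ 2 - (1 + β ^ 2) * (p - p') ^ 2)
      ≤ 1 + β ^ 2 - (p + p' + β ^ 2 / 2) := by
    have h : (p + p' + β ^ 2 / 2) ^ 2 - (1 + β ^ 2) * (p - p') ^ 2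
        ≤ (1 + β ^ 2 - (p + p' + β ^ 2 / 2)) ^ 2 := by
      nlinarith [sq_nonneg (p - p'), sq_nonneg β,
        mul_nonneg (sq_nonneg β) (sq_nonneg (p - p'))]
    calc _ ≤ Real.sqrt ((1 + β ^ 2 - (p + p' + β ^ 2 / 2)) ^ 2) := Real.sqrt_le_sqrt h
      _ = _ := Real.sqrt_sq hb0
  have hsq0 : 0 ≤ Real.sqrt ((p + p' + β ^ 2 / 2) ^ 2 - (1 + β ^ 2) * (p - p') ^ 2) :=
    Real.sqrt_nonneg _
  refine ⟨hrad0, div_nonneg (by linarith) hden.le, ?_,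
    div_nonneg (by linarith) hden.le, ?_⟩
  · rw [div_le_one hden]; linarith
  · rw [div_le_one hden]; linarith

/-- Von Neumann stability of the direct scheme with constant mass:
if rx² + ry² ≤ 1/4, the radicand is nonnegative and both characteristic
roots s± lie in [0, 1]. -/
theorem direct_scheme_vonNeumann_stability
    (rx ry Δx Δy : ℝ) (hrx : 0 < rx) (hry : 0 < ry)
    (hΔx : 0 < Δx) (hΔy : 0 < Δy)
    (hCFL : rx ^ 2 + ry ^ 2 ≤ 1 / 4) :
    ∀ (kx ky kx' ky' β : ℝ), 0 ≤ β →
      let p := ry ^ 2 * Real.sin (ky * Δy / 2) ^ 2 + rx ^ 2 * Real.sin (kx * Δx / 2) ^ 2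
      let p' := ry ^ 2 * Real.sin (ky' * Δy / 2) ^ 2 + rx ^ 2 * Real.sin (kx' * Δx / 2) ^ 2
      let rad := (p + p' + β ^ 2 / 2) ^ 2 - (1 + β ^ 2) * (p - p') ^ 2
      let sPlus := ((p + p' + β ^ 2 / 2) + Real.sqrt rad) / (1 + β ^ 2)
      let sMinus := ((p + p' + β ^ 2 / 2) - Real.sqrt rad) / (1 + β ^ 2)
      0 ≤ rad ∧ 0 ≤ sPlus ∧ sPlus ≤ 1 ∧ 0 ≤ sMinus ∧ sMinus ≤ 1 := by
  intro kx ky kx' ky' β hβ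
  have key : ∀ a b : ℝ,
      0 ≤ ry ^ 2 * Real.sin a ^ 2 + rx ^ 2 * Real.sin b ^ 2 ∧
      ry ^ 2 * Real.sin a ^ 2 + rx ^ 2 * Real.sin b ^ 2 ≤ 1 / 4 := by
    intro a b
    constructor
    · positivity
    · nlinarith [Real.sin_sq_le_one a, Real.sin_sq_le_one b, sq_nonneg (Real.sin a),
        sq_nonneg (Real.sin b), sq_nonneg rx, sq_nonneg ry]
  obtain ⟨h1, h2⟩ := key (ky * Δy / 2) (kx * Δx / 2)
  obtain ⟨h3, h4⟩ := key (ky' * Δy / 2) (kx' * Δx / 2)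
  exact vn_aux _ _ β hβ h1 h2 h3 h4
end

section
/- For all p, p' with 0 ≤ p, p' ≤ p_max where p_max = r_x² + r_y² ≤ 1/4 and all β ≥ 0: (p + p' + β²/2 + √((p + p' + β²/2)² − (1+β²)(p−p')²)) / (1+β²) ≤ 1. -/
/-- The larger characteristic root of the direct scheme does not exceed 1
under the Courant condition rx² + ry² ≤ 1/4. -/
theorem larger_root_le_one (rx ry p p' β : ℝ)
    (hpmax : rx ^ 2 + ry ^ 2 ≤ 1 / 4)
    (hp : 0 ≤ p) (hp' : 0 ≤ p')
    (hple : p ≤ rx ^ 2 + ry ^ 2) (hp'le : p' ≤ rx ^ 2 + ry ^ 2)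
    (hβ : 0 ≤ β) :
    ((p + p' + β ^ 2 / 2) +
        Real.sqrt ((p + p' + β ^ 2 / 2) ^ 2 - (1 + β ^ 2) * (p - p') ^ 2)) /
      (1 + β ^ 2) ≤ 1 := by
  have hB : (0:ℝ) < 1 + β ^ 2 := by positivity
  have hsum : p + p' ≤ 1 / 2 := by linarith
  have hnn : 0 ≤ (1 + β ^ 2) - (p + p' + β ^ 2 / 2) := by linarith
  rw [div_le_one hB]
  have h1 : Real.sqrt ((p + p' + β ^ 2 / 2) ^ 2 - (1 + β ^ 2) * (p - p') ^ 2)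
      ≤ (1 + β ^ 2) - (p + p' + β ^ 2 / 2) := by
    rw [show (1 + β ^ 2) - (p + p' + β ^ 2 / 2)
        = Real.sqrt (((1 + β ^ 2) - (p + p' + β ^ 2 / 2)) ^ 2) by
      rw [Real.sqrt_sq hnn]]
    apply Real.sqrt_le_sqrt
    nlinarith [sq_nonneg (p - p'), sq_nonneg β,
      mul_nonneg hB.le (by nlinarith [sq_nonneg (p - p')] :
        (0:ℝ) ≤ 1 - 2 * (p + p') + (p - p') ^ 2)]
  linarith
end

section
/- Under the stability condition (vΔt/Δx)² + (vΔt/Δy)² ≤ 1/4, the argument of the arcsine in the direct-scheme dispersion relation, (Δt/ħ)·√[ ((2ħv/Δx) sin(kx Δx/2))² + ((2ħv/Δy) sin(ky Δy/2))² + m² ] / √(1 + (mΔt/ħ)²), lies in the interval [0, 1] for all real kx, ky, so the lattice frequency is real for every wavevector. -/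
/-- Under the stability condition the argument of the arcsine in the direct-scheme
dispersion lies in [0, 1] for every real wavevector. -/
theorem arcsin_argument_in_unit_interval
    (hbar v m Δx Δy Δt : ℝ)
    (hhbar : 0 < hbar) (hv : 0 < v) (hm : 0 ≤ m)
    (hΔx : 0 < Δx) (hΔy : 0 < Δy) (hΔt : 0 < Δt)
    (hCFL : (v * Δt / Δx) ^ 2 + (v * Δt / Δy) ^ 2 ≤ 1 / 4) :
    ∀ kx ky : ℝ,
      0 ≤ (Δt / hbar) *
            Real.sqrt ((((2 * hbar * v) / Δx) * Real.sin (kx * Δx / 2)) ^ 2 +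
                (((2 * hbar * v) / Δy) * Real.sin (ky * Δy / 2)) ^ 2 + m ^ 2) /
            Real.sqrt (1 + (m * Δt / hbar) ^ 2) ∧
      (Δt / hbar) *
            Real.sqrt ((((2 * hbar * v) / Δx) * Real.sin (kx * Δx / 2)) ^ 2 +
                (((2 * hbar * v) / Δy) * Real.sin (ky * Δy / 2)) ^ 2 + m ^ 2) /
            Real.sqrt (1 + (m * Δt / hbar) ^ 2) ≤ 1 := by
  intro kx ky
  have hA : (0:ℝ) ≤ (((2 * hbar * v) / Δx) * Real.sin (kx * Δx / 2)) ^ 2 +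
      (((2 * hbar * v) / Δy) * Real.sin (ky * Δy / 2)) ^ 2 + m ^ 2 := by positivity
  set A := (((2 * hbar * v) / Δx) * Real.sin (kx * Δx / 2)) ^ 2 +
      (((2 * hbar * v) / Δy) * Real.sin (ky * Δy / 2)) ^ 2 + m ^ 2 with hAdef
  constructor
  · positivity
  · rw [div_le_one (by positivity)]
    have h1 : (Δt / hbar) * Real.sqrt A = Real.sqrt ((Δt / hbar) ^ 2 * A) := by
      rw [Real.sqrt_mul (by positivity), Real.sqrt_sq (by positivity)]
    rw [h1]
    apply Real.sqrt_le_sqrt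
    have hs1 : Real.sin (kx * Δx / 2) ^ 2 ≤ 1 := Real.sin_sq_le_one _
    have hs2 : Real.sin (ky * Δy / 2) ^ 2 ≤ 1 := Real.sin_sq_le_one _
    have hx : (Δt / hbar) ^ 2 * ((((2 * hbar * v) / Δx) * Real.sin (kx * Δx / 2)) ^ 2)
        = 4 * (v * Δt / Δx) ^ 2 * Real.sin (kx * Δx / 2) ^ 2 := by
      field_simp; ring
    have hy : (Δt / hbar) ^ 2 * ((((2 * hbar * v) / Δy) * Real.sin (ky * Δy / 2)) ^ 2)
        = 4 * (v * Δt / Δy) ^ 2 * Real.sin (ky * Δy / 2) ^ 2 := by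
      field_simp; ring
    have hmeq : (Δt / hbar) ^ 2 * m ^ 2 = (m * Δt / hbar) ^ 2 := by ring
    have hx' : (0:ℝ) ≤ (v * Δt / Δx) ^ 2 := by positivity
    have hy' : (0:ℝ) ≤ (v * Δt / Δy) ^ 2 := by positivity
    rw [hAdef]
    nlinarith [sq_nonneg (Real.sin (kx * Δx / 2)), sq_nonneg (Real.sin (ky * Δy / 2))]
end
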